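/- arXiv:2412.17289 — 4 statements merged into one kernel-verified Lean document; each statement's English description precedes it below -/
import Mathlib

section
/- Let n ≥ 2, and for each qubit index 0 ≤ j ≤ n−1 and single-qubit Pauli matrix P ∈ {X, Y, Z} let P_j = I_2^{⊗j} ⊗ P ⊗ I_2^{⊗(n−1−j)} be the corresponding 2^n × 2^n operator. Given real coupling coefficients J_{jk} ≥ 0 for 0 ≤ j < k ≤ n−1, define the Heisenberg Hamiltonian H_1 = Σ_{0 ≤ j < k ≤ n−1} J_{jk} (X_j X_k + Y_j Y_k + Z_j Z_k). Then the largest eigenvalue of H_1 equals Σ_{0 ≤ j < k ≤ n−1} J_{jk}. -/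
open Matrix

/-- The single-qubit Pauli matrices. -/
noncomputable def pauliX : Matrix (Fin 2) (Fin 2) ℂ := !![0, 1; 1, 0]
noncomputable def pauliY : Matrix (Fin 2) (Fin 2) ℂ := !![0, -Complex.I; Complex.I, 0]
noncomputable def pauliZ : Matrix (Fin 2) (Fin 2) ℂ := !![1, 0; 0, -1]

/-- The operator `I ⊗ ... ⊗ P ⊗ ... ⊗ I` acting as `P` on qubit `j` of an `n`-qubit
register, realized on the tensor-product index type `Fin n → Fin 2`. -/
noncomputable def onQubit {n : ℕ} (P : Matrix (Fin 2) (Fin 2) ℂ) (j : Fin n) :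
    Matrix (Fin n → Fin 2) (Fin n → Fin 2) ℂ :=
  fun x y => P (x j) (y j) * ∏ i ∈ Finset.univ.erase j, (if x i = y i then (1 : ℂ) else 0)

/- ### Auxiliary material -/

lemma pauli_sum (a b c d : Fin 2) :
    pauliX a b * pauliX c d + pauliY a b * pauliY c d + pauliZ a b * pauliZ c d =
      2 * ((if b = c then 1 else 0) * (if d = a then 1 else 0)) -
        (if a = b then 1 else 0) * (if c = d then 1 else 0) := by
  fin_cases a <;> fin_cases b <;> fin_cases c <;> fin_cases d <;>
    simp [pauliX, pauliY, pauliZ] <;> ring_nf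

lemma onQubit_mul {n : ℕ} (P Q : Matrix (Fin 2) (Fin 2) ℂ) {j k : Fin n} (hjk : j ≠ k)
    (x y : Fin n → Fin 2) :
    (onQubit P j * onQubit Q k) x y =
      P (x j) (y j) * Q (x k) (y k) *
        ∏ i ∈ (Finset.univ.erase j).erase k, (if x i = y i then (1:ℂ) else 0) := by
  rw [Matrix.mul_apply]
  rw [Finset.sum_eq_single_of_mem (Function.update x j (y j)) (Finset.mem_univ _)]
  · unfold onQubit
    have h1 : (∏ i ∈ Finset.univ.erase j,
        (if x i = Function.update x j (y j) i then (1:ℂ) else 0)) = 1 := by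
      apply Finset.prod_eq_one
      intro i hi
      rw [Function.update_of_ne (Finset.ne_of_mem_erase hi)]
      simp
    have h2 : (Finset.univ.erase k : Finset (Fin n)) =
        insert j ((Finset.univ.erase k).erase j) := by
      rw [Finset.insert_erase]
      exact Finset.mem_erase.2 ⟨hjk, Finset.mem_univ _⟩
    rw [h1, h2, Finset.prod_insert (Finset.notMem_erase _ _)]
    rw [Function.update_self]
    have h3 : (∏ i ∈ (Finset.univ.erase k).erase j,
        (if Function.update x j (y j) i = y i then (1:ℂ) else 0)) =
        ∏ i ∈ (Finset.univ.erase j).erase k, (if x i = y i then (1:ℂ) else 0) := by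
      rw [Finset.erase_right_comm]
      apply Finset.prod_congr rfl
      intro i hi
      rw [Function.update_of_ne (Finset.ne_of_mem_erase (Finset.mem_of_mem_erase hi))]
    rw [Function.update_of_ne (Ne.symm hjk), h3]
    simp
    ring
  · intro z _ hz
    unfold onQubit
    rcases Function.ne_iff.1 hz with ⟨i, hi⟩
    by_cases hij : i = j
    · subst hij
      rw [Function.update_self] at hi
      have : (∏ i ∈ Finset.univ.erase k, (if z i = y i then (1:ℂ) else 0)) = 0 := by
        apply Finset.prod_eq_zero (Finset.mem_erase.2 ⟨hjk, Finset.mem_univ _⟩)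
        simp [hi]
      rw [this]; ring
    · rw [Function.update_of_ne hij] at hi
      have : (∏ i' ∈ Finset.univ.erase j, (if x i' = z i' then (1:ℂ) else 0)) = 0 := by
        apply Finset.prod_eq_zero (Finset.mem_erase.2 ⟨hij, Finset.mem_univ _⟩)
        simp [Ne.symm hi]
      rw [this]; ring

/-- The permutation matrix swapping qubits `j` and `k`. -/
noncomputable def swapMat {n : ℕ} (j k : Fin n) :
    Matrix (Fin n → Fin 2) (Fin n → Fin 2) ℂ :=
  fun x y => if y = x ∘ Equiv.swap j k then 1 else 0

lemma eq_ind {n : ℕ} (x y : Fin n → Fin 2) :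
    (if x = y then (1:ℂ) else 0) = ∏ i, (if x i = y i then (1:ℂ) else 0) := by
  rw [Finset.prod_boole]
  simp [funext_iff]

lemma eq_ind_split {n : ℕ} {j k : Fin n} (hjk : j ≠ k) (x y : Fin n → Fin 2) :
    (if x = y then (1:ℂ) else 0) =
      (if x j = y j then 1 else 0) * (if x k = y k then 1 else 0) *
        ∏ i ∈ (Finset.univ.erase j).erase k, (if x i = y i then (1:ℂ) else 0) := by
  rw [eq_ind]
  conv_lhs => rw [show (Finset.univ : Finset (Fin n)) = insert j (insert k ((Finset.univ.erase j).erase k)) by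
    rw [Finset.insert_erase (Finset.mem_erase.2 ⟨Ne.symm hjk, Finset.mem_univ _⟩),
      Finset.insert_erase (Finset.mem_univ _)]]
        ;
  rw [Finset.prod_insert (by simp [hjk]), Finset.prod_insert (Finset.notMem_erase _ _)]
  ring

lemma swap_ind {n : ℕ} {j k : Fin n} (hjk : j ≠ k) (x y : Fin n → Fin 2) :
    swapMat j k x y =
      (if y j = x k then 1 else 0) * (if y k = x j then 1 else 0) *
        ∏ i ∈ (Finset.univ.erase j).erase k, (if x i = y i then (1:ℂ) else 0) := by
  have : swapMat j k x y = ∏ i, (if y i = x (Equiv.swap j k i) then (1:ℂ) else 0) := by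
    unfold swapMat
    rw [Finset.prod_boole]
    simp [funext_iff]
  rw [this]
  conv_lhs => rw [show (Finset.univ : Finset (Fin n)) = insert j (insert k ((Finset.univ.erase j).erase k)) by
    rw [Finset.insert_erase (Finset.mem_erase.2 ⟨Ne.symm hjk, Finset.mem_univ _⟩),
      Finset.insert_erase (Finset.mem_univ _)]]
        ;
  rw [Finset.prod_insert (by simp [hjk]), Finset.prod_insert (Finset.notMem_erase _ _)]
  rw [Equiv.swap_apply_left, Equiv.swap_apply_right]
  have : (∏ i ∈ (Finset.univ.erase j).erase k, (if y i = x (Equiv.swap j k i) then (1:ℂ) else 0)) =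
      ∏ i ∈ (Finset.univ.erase j).erase k, (if x i = y i then (1:ℂ) else 0) := by
    apply Finset.prod_congr rfl
    intro i hi
    rw [Equiv.swap_apply_of_ne_of_ne (Finset.ne_of_mem_erase (Finset.mem_of_mem_erase hi))
      (Finset.ne_of_mem_erase hi)]
    simp [eq_comm]
  rw [this]
  ring

/-- The Heisenberg interaction term equals `2·SWAP − 1`. -/
lemma heis_eq {n : ℕ} {j k : Fin n} (hjk : j ≠ k) :
    onQubit pauliX j * onQubit pauliX k + onQubit pauliY j * onQubit pauliY k +
      onQubit pauliZ j * onQubit pauliZ k = (2:ℂ) • swapMat j k - 1 := by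
  ext x y
  simp only [Matrix.add_apply, Matrix.sub_apply, Matrix.smul_apply, Matrix.one_apply,
    onQubit_mul _ _ hjk, smul_eq_mul]
  rw [swap_ind hjk, eq_ind_split hjk]
  linear_combination (∏ i ∈ (Finset.univ.erase j).erase k, (if x i = y i then (1:ℂ) else 0)) *
    pauli_sum (x j) (y j) (x k) (y k)

lemma sum_mulVec' {ι α : Type*} [Fintype ι] (s : Finset α) (M : α → Matrix ι ι ℂ) (v : ι → ℂ) :
    (∑ a ∈ s, M a) *ᵥ v = ∑ a ∈ s, (M a) *ᵥ v := by
  ext x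
  simp only [Matrix.mulVec, dotProduct, Finset.sum_apply, Matrix.sum_apply,
    Finset.sum_mul]
  rw [Finset.sum_comm]

lemma swapMat_mulVec {n : ℕ} (j k : Fin n) (v : (Fin n → Fin 2) → ℂ) (x : Fin n → Fin 2) :
    (swapMat j k *ᵥ v) x = v (x ∘ Equiv.swap j k) := by
  simp [swapMat, Matrix.mulVec, dotProduct, ite_mul]

lemma algmap_mulVec {ι : Type*} [Fintype ι] [DecidableEq ι] (μ : ℂ) (v : ι → ℂ) :
    ((algebraMap ℂ (Matrix ι ι ℂ)) μ) *ᵥ v = μ • v := by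
  rw [Matrix.algebraMap_eq_diagonal]
  ext x
  simp [Matrix.mulVec_diagonal]

lemma mem_spectrum_of_eig {ι : Type*} [Fintype ι] [DecidableEq ι]
    (M : Matrix ι ι ℂ) (μ : ℂ) (v : ι → ℂ) (hv : v ≠ 0) (h : M *ᵥ v = μ • v) :
    μ ∈ spectrum ℂ M := by
  rw [spectrum.mem_iff]
  rintro ⟨u, hu⟩
  have h0 : (algebraMap ℂ (Matrix ι ι ℂ) μ - M) *ᵥ v = 0 := by
    rw [Matrix.sub_mulVec, h, algmap_mulVec, sub_self]
  apply hv
  calc v = ((↑u⁻¹ : Matrix ι ι ℂ) * (↑u : Matrix ι ι ℂ)) *ᵥ v := by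
        rw [u.inv_mul, Matrix.one_mulVec]
    _ = (↑u⁻¹ : Matrix ι ι ℂ) *ᵥ ((↑u : Matrix ι ι ℂ) *ᵥ v) := (Matrix.mulVec_mulVec _ _ _).symm
    _ = 0 := by rw [hu, h0, Matrix.mulVec_zero]

/-- The largest eigenvalue of the Heisenberg Hamiltonian
`H₁ = Σ_{j<k} J_{jk}(X_j X_k + Y_j Y_k + Z_j Z_k)` with nonnegative couplings
equals `Σ_{j<k} J_{jk}`. -/
theorem stmt_11 {n : ℕ} (hn : 2 ≤ n) (Jc : Fin n → Fin n → ℝ)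
    (hJ : ∀ j k : Fin n, j < k → 0 ≤ Jc j k) :
    let H₁ : Matrix (Fin n → Fin 2) (Fin n → Fin 2) ℂ :=
      ∑ j : Fin n, ∑ k ∈ Finset.Ioi j, (Jc j k : ℂ) •
        (onQubit pauliX j * onQubit pauliX k + onQubit pauliY j * onQubit pauliY k +
          onQubit pauliZ j * onQubit pauliZ k)
    IsGreatest {x : ℝ | (x : ℂ) ∈ spectrum ℂ H₁}
      (∑ j : Fin n, ∑ k ∈ Finset.Ioi j, Jc j k) := by
  intro H₁
  have hH : H₁ = ∑ j : Fin n, ∑ k ∈ Finset.Ioi j,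
      (Jc j k : ℂ) • ((2:ℂ) • swapMat j k - 1) := by
    refine Finset.sum_congr rfl fun j _ => Finset.sum_congr rfl fun k hk => ?_
    rw [heis_eq (Finset.mem_Ioi.1 hk).ne]
  constructor
  · -- membership : Σ J is an eigenvalue, with eigenvector the all-zero basis state
    show ((∑ j : Fin n, ∑ k ∈ Finset.Ioi j, Jc j k : ℝ) : ℂ) ∈ spectrum ℂ H₁
    classical
    set z₀ : Fin n → Fin 2 := fun _ => 0 with hz₀
    set v : (Fin n → Fin 2) → ℂ := fun x => if x = z₀ then 1 else 0 with hv
    have hv0 : v ≠ 0 := by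
      intro h
      have := congrFun h z₀
      simp [hv] at this
    have key : ∀ (j k : Fin n), ((2:ℂ) • swapMat j k - 1) *ᵥ v = v := by
      intro j k
      rw [Matrix.sub_mulVec, Matrix.smul_mulVec, Matrix.one_mulVec]
      have hs : swapMat j k *ᵥ v = v := by
        ext x
        rw [swapMat_mulVec]
        have hiff : (x ∘ Equiv.swap j k = z₀) ↔ (x = z₀) := by
          constructor
          · intro h
            funext i
            have h2 := congrFun h ((Equiv.swap j k) i)
            simpa using h2
          · intro h
            subst h
            funext i
            rfl
        simp only [hv]
        rw [if_congr hiff rfl rfl]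
      rw [hs]
      ext x
      simp only [Pi.sub_apply, Pi.smul_apply, smul_eq_mul]
      ring
    apply mem_spectrum_of_eig _ _ v hv0
    rw [hH, sum_mulVec']
    have hrow : ∀ j : Fin n,
        (∑ k ∈ Finset.Ioi j, (Jc j k : ℂ) • ((2:ℂ) • swapMat j k - 1)) *ᵥ v
          = (∑ k ∈ Finset.Ioi j, (Jc j k : ℂ)) • v := by
      intro j
      rw [sum_mulVec', Finset.sum_smul]
      refine Finset.sum_congr rfl fun k hk => ?_
      rw [Matrix.smul_mulVec, key]
    rw [Finset.sum_congr rfl fun j _ => hrow j, ← Finset.sum_smul]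
    push_cast
    rfl
  · -- upper bound
    rintro μ hμ
    simp only [Set.mem_setOf_eq] at hμ
    rw [spectrum.mem_iff] at hμ
    have hdet : ((algebraMap ℂ (Matrix (Fin n → Fin 2) (Fin n → Fin 2) ℂ)) (μ:ℂ) - H₁).det = 0 := by
      by_contra h
      exact hμ ((Matrix.isUnit_iff_isUnit_det _).2 (isUnit_iff_ne_zero.2 h))
    obtain ⟨v, hv0, hv⟩ := Matrix.exists_mulVec_eq_zero_iff.2 hdet
    have heig : H₁ *ᵥ v = (μ:ℂ) • v := by
      rw [Matrix.sub_mulVec, algmap_mulVec, sub_eq_zero] at hv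
      exact hv.symm
    set N : ℝ := ∑ x, Complex.normSq (v x) with hN
    have hN0 : 0 < N := by
      obtain ⟨x₀, hx₀⟩ := Function.ne_iff.1 hv0
      refine Finset.sum_pos' (fun x _ => Complex.normSq_nonneg _) ⟨x₀, Finset.mem_univ _, ?_⟩
      exact Complex.normSq_pos.2 hx₀
    have hNc : (N:ℂ) = ∑ x, (starRingEnd ℂ) (v x) * v x := by
      rw [hN]
      push_cast
      exact Finset.sum_congr rfl fun x _ => Complex.normSq_eq_conj_mul_self
    have EL : ∑ x, (starRingEnd ℂ) (v x) * (H₁ *ᵥ v) x = (μ:ℂ) * (N:ℂ) := by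
      rw [heig, hNc, Finset.mul_sum]
      refine Finset.sum_congr rfl fun x _ => ?_
      rw [Pi.smul_apply, smul_eq_mul]
      ring
    have ER : ∑ x, (starRingEnd ℂ) (v x) * (H₁ *ᵥ v) x =
        ∑ j : Fin n, ∑ k ∈ Finset.Ioi j, (Jc j k:ℂ) *
          (2 * (∑ x, (starRingEnd ℂ) (v x) * v (x ∘ Equiv.swap j k)) - (N:ℂ)) := by
      rw [hH, sum_mulVec']
      rw [show (∑ x, (starRingEnd ℂ) (v x) *
            (∑ j : Fin n, (∑ k ∈ Finset.Ioi j, (Jc j k : ℂ) • ((2:ℂ) • swapMat j k - 1)) *ᵥ v) x)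
          = ∑ j : Fin n, ∑ x, (starRingEnd ℂ) (v x) *
            ((∑ k ∈ Finset.Ioi j, (Jc j k : ℂ) • ((2:ℂ) • swapMat j k - 1)) *ᵥ v) x by
        simp only [Finset.sum_apply, Finset.mul_sum]
        rw [Finset.sum_comm]]
      refine Finset.sum_congr rfl fun j _ => ?_
      rw [sum_mulVec']
      rw [show (∑ x, (starRingEnd ℂ) (v x) *
            (∑ k ∈ Finset.Ioi j, ((Jc j k : ℂ) • ((2:ℂ) • swapMat j k - 1)) *ᵥ v) x)
          = ∑ k ∈ Finset.Ioi j, ∑ x, (starRingEnd ℂ) (v x) *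
            (((Jc j k : ℂ) • ((2:ℂ) • swapMat j k - 1)) *ᵥ v) x by
        simp only [Finset.sum_apply, Finset.mul_sum]
        rw [Finset.sum_comm]]
      refine Finset.sum_congr rfl fun k hk => ?_
      calc ∑ x, (starRingEnd ℂ) (v x) * (((Jc j k : ℂ) • ((2:ℂ) • swapMat j k - 1)) *ᵥ v) x
          = ∑ x, (Jc j k:ℂ) *
              (2 * ((starRingEnd ℂ) (v x) * v (x ∘ Equiv.swap j k)) -
                (starRingEnd ℂ) (v x) * v x) := by
            refine Finset.sum_congr rfl fun x _ => ?_
            rw [Matrix.smul_mulVec, Matrix.sub_mulVec, Matrix.smul_mulVec,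
              Matrix.one_mulVec]
            simp only [Pi.smul_apply, Pi.sub_apply, smul_eq_mul, swapMat_mulVec]
            ring
        _ = (Jc j k:ℂ) *
              (2 * (∑ x, (starRingEnd ℂ) (v x) * v (x ∘ Equiv.swap j k)) - (N:ℂ)) := by
            rw [← Finset.mul_sum, Finset.sum_sub_distrib, ← Finset.mul_sum, ← hNc]
    have hWle : ∀ j k : Fin n,
        (∑ x, (starRingEnd ℂ) (v x) * v (x ∘ Equiv.swap j k)).re ≤ N := by
      intro j k
      rw [Complex.re_sum]
      have hsum2 : ∑ x, Complex.normSq (v (x ∘ Equiv.swap j k)) = N := by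
        rw [hN]
        rw [← Equiv.sum_comp (Equiv.arrowCongr (Equiv.swap j k) (Equiv.refl (Fin 2)))
          (fun x => Complex.normSq (v x))]
        refine Finset.sum_congr rfl fun x _ => ?_
        have hax : (Equiv.arrowCongr (Equiv.swap j k) (Equiv.refl (Fin 2))) x
            = x ∘ Equiv.swap j k := by
          funext i
          simp [Equiv.arrowCongr]
        rw [hax]
      calc ∑ x, ((starRingEnd ℂ) (v x) * v (x ∘ Equiv.swap j k)).re
          ≤ ∑ x, (Complex.normSq (v x) + Complex.normSq (v (x ∘ Equiv.swap j k))) / 2 := by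
            refine Finset.sum_le_sum fun x _ => ?_
            have h1 := Complex.re_le_norm ((starRingEnd ℂ) (v x) * v (x ∘ Equiv.swap j k))
            have h2 : ‖(starRingEnd ℂ) (v x) * v (x ∘ Equiv.swap j k)‖ =
                ‖v x‖ * ‖v (x ∘ Equiv.swap j k)‖ := by
              rw [norm_mul]
              simp
            nlinarith [sq_nonneg (‖v x‖ - ‖v (x ∘ Equiv.swap j k)‖),
              Complex.sq_norm (v x), Complex.sq_norm (v (x ∘ Equiv.swap j k)),
              Complex.normSq_eq_norm_sq (v x), Complex.normSq_eq_norm_sq (v (x ∘ Equiv.swap j k))]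
        _ = N := by
            rw [← Finset.sum_div, Finset.sum_add_distrib, hsum2, ← hN]
            ring
    have hre : μ * N = ∑ j : Fin n, ∑ k ∈ Finset.Ioi j, Jc j k *
        (2 * (∑ x, (starRingEnd ℂ) (v x) * v (x ∘ Equiv.swap j k)).re - N) := by
      have h := EL.symm.trans ER
      calc μ * N = ((μ:ℂ) * (N:ℂ)).re := by
            rw [← Complex.ofReal_mul]
            exact (Complex.ofReal_re _).symm
        _ = _ := by
            rw [h, Complex.re_sum]
            refine Finset.sum_congr rfl fun j _ => ?_
            rw [Complex.re_sum]
            refine Finset.sum_congr rfl fun k _ => ?_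
            simp [Complex.mul_re, Complex.sub_re, Complex.ofReal_re, Complex.ofReal_im]
    have hfin : μ * N ≤ (∑ j : Fin n, ∑ k ∈ Finset.Ioi j, Jc j k) * N := by
      rw [hre, Finset.sum_mul]
      refine Finset.sum_le_sum fun j _ => ?_
      rw [Finset.sum_mul]
      refine Finset.sum_le_sum fun k hk => ?_
      have hj := hJ j k (Finset.mem_Ioi.1 hk)
      have hw := hWle j k
      nlinarith
    exact le_of_mul_le_mul_right hfin hN0
end

section
/- Let V_1 and V_2 be disjoint sets of qubit indices with V = V_1 ∪ V_2 ⊆ {0, …, n−1}, let E ⊆ V_1 × V_2 be a set of edges between V_1 and V_2, and let J^y_{jk}, J^z_{jk} (for (j,k) ∈ E) and h_l (for l ∈ V) be real coefficients. Define the 2^n × 2^n bipartite Hamiltonian H_2 = Σ_{(j,k) ∈ E} ( J^y_{jk} Y_j Y_k + J^z_{jk} Z_j Z_k ) + Σ_{l ∈ V} h_l X_l, and the operator W = Π_{j ∈ V_1} Y_j · Π_{k ∈ V_2} Z_k. Then W is unitary and W H_2 W† = −H_2; consequently the spectra of H_2 and −H_2 coincide, so the smallest eigenvalue of H_2 is the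 negative of its largest eigenvalue. -/
open Matrix

/-! `W` is a tensor product of single-qubit unitaries, so conjugation by `W` acts on each
qubit separately. On `V₁` the factor is `Y`, which fixes `Y` and negates `X` and `Z`; on `V₂`
it is `Z`, which fixes `Z` and negates `X` and `Y`. Hence every field term `X_l` changes sign,
and on an edge `(j, k) ∈ V₁ × V₂` exactly one factor of `Y_j Y_k` and of `Z_j Z_k` changes
sign, so `W H₂ W† = -H₂`. Unitary conjugation preserves the spectrum, hence
`σ(H₂) = σ(-H₂) = -σ(H₂)`. -/

section PiKron

variable {ι m n p R : Type*} [Fintype ι]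

def piKron [CommMonoid R] (A : ι → Matrix m n R) : Matrix (ι → m) (ι → n) R :=
  fun x y => ∏ i, A i (x i) (y i)

variable [CommSemiring R]

theorem piKron_mul [DecidableEq ι] [Fintype n] (A : ι → Matrix m n R) (B : ι → Matrix n p R) :
    piKron A * piKron B = piKron fun i => A i * B i := by
  ext x y
  simp only [piKron, mul_apply]
  rw [Fintype.prod_sum fun i a => A i (x i) a * B i a (y i)]
  exact Finset.sum_congr rfl fun z _ => Finset.prod_mul_distrib.symm

theorem piKron_one [DecidableEq m] : piKron (fun _ : ι => (1 : Matrix m m R)) = 1 := by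
  ext x y
  by_cases h : x = y
  · subst h
    simp [piKron]
  · obtain ⟨i, hi⟩ := Function.ne_iff.mp h
    simpa [piKron, h] using Finset.prod_eq_zero (Finset.mem_univ i) (by simp [hi])

theorem conjTranspose_piKron [StarRing R] (A : ι → Matrix m n R) :
    (piKron A)ᴴ = piKron fun i => (A i)ᴴ := by
  ext x y
  simp [piKron, conjTranspose_apply]

theorem piKron_mem_unitaryGroup {R : Type*} [CommRing R] [StarRing R] [DecidableEq ι] [Fintype m]
    [DecidableEq m] {U : ι → Matrix m m R} (hU : ∀ i, U i ∈ unitaryGroup m R) :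
    piKron U ∈ unitaryGroup (ι → m) R := by
  rw [mem_unitaryGroup_iff, star_eq_conjTranspose, conjTranspose_piKron, piKron_mul]
  simp_rw [← star_eq_conjTranspose, fun i => mem_unitaryGroup_iff.mp (hU i)]
  exact piKron_one

end PiKron

theorem onQubit_eq_piKron {n : ℕ} (P : Matrix (Fin 2) (Fin 2) ℂ) (j : Fin n) :
    onQubit P j = piKron (Function.update 1 j P) := by
  ext x y
  rw [onQubit, piKron, ← Finset.mul_prod_erase Finset.univ _ (Finset.mem_univ j)]
  congr 1
  · simp
  · refine Finset.prod_congr rfl fun i hi => ?_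
    simp [Function.update_of_ne (Finset.ne_of_mem_erase hi), one_apply]

theorem onQubit_neg {n : ℕ} (P : Matrix (Fin 2) (Fin 2) ℂ) (j : Fin n) :
    onQubit (-P) j = -onQubit P j := by
  ext x y
  simp [onQubit, neg_mul]

theorem piKron_mul_onQubit_mul_conjTranspose {n : ℕ} {U : Fin n → Matrix (Fin 2) (Fin 2) ℂ}
    (hU : ∀ i, U i ∈ unitaryGroup (Fin 2) ℂ) (P : Matrix (Fin 2) (Fin 2) ℂ) (j : Fin n) :
    piKron U * onQubit P j * (piKron U)ᴴ = onQubit (U j * P * (U j)ᴴ) j := by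
  rw [onQubit_eq_piKron, onQubit_eq_piKron, conjTranspose_piKron, piKron_mul, piKron_mul]
  congr 1
  ext1 i
  rcases eq_or_ne i j with rfl | h
  · simp
  · simp only [Function.update_of_ne h, Pi.one_apply, mul_one]
    exact mem_unitaryGroup_iff.mp (hU i)

theorem conjTranspose_pauliY : pauliYᴴ = pauliY := by
  ext i j; fin_cases i <;> fin_cases j <;> simp [pauliY]

theorem conjTranspose_pauliZ : pauliZᴴ = pauliZ := by
  ext i j; fin_cases i <;> fin_cases j <;> simp [pauliZ]

theorem pauliY_mem_unitaryGroup : pauliY ∈ unitaryGroup (Fin 2) ℂ := by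
  rw [mem_unitaryGroup_iff, star_eq_conjTranspose, conjTranspose_pauliY]
  simp [pauliY, one_fin_two]

theorem pauliZ_mem_unitaryGroup : pauliZ ∈ unitaryGroup (Fin 2) ℂ := by
  rw [mem_unitaryGroup_iff, star_eq_conjTranspose, conjTranspose_pauliZ]
  simp [pauliZ, one_fin_two]

theorem pauliY_conj_pauliX : pauliY * pauliX * pauliYᴴ = -pauliX := by
  rw [conjTranspose_pauliY]; simp [pauliX, pauliY]

theorem pauliY_conj_pauliY : pauliY * pauliY * pauliYᴴ = pauliY := by
  rw [conjTranspose_pauliY]; simp [pauliY]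

theorem pauliY_conj_pauliZ : pauliY * pauliZ * pauliYᴴ = -pauliZ := by
  rw [conjTranspose_pauliY]; simp [pauliY, pauliZ]

theorem pauliZ_conj_pauliX : pauliZ * pauliX * pauliZᴴ = -pauliX := by
  rw [conjTranspose_pauliZ]; simp [pauliX, pauliZ]

theorem pauliZ_conj_pauliY : pauliZ * pauliY * pauliZᴴ = -pauliY := by
  rw [conjTranspose_pauliZ]; simp [pauliY, pauliZ]

theorem pauliZ_conj_pauliZ : pauliZ * pauliZ * pauliZᴴ = pauliZ := by
  rw [conjTranspose_pauliZ]; simp [pauliZ]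

section Bipartite

variable {n : ℕ} (V₁ V₂ : Finset (Fin n))

noncomputable def bipartiteFlip : Fin n → Matrix (Fin 2) (Fin 2) ℂ :=
  fun i => if i ∈ V₁ then pauliY else if i ∈ V₂ then pauliZ else 1

noncomputable def bipartiteHamiltonian (E : Finset (Fin n × Fin n))
    (Jy Jz : Fin n → Fin n → ℝ) (h : Fin n → ℝ) : Matrix (Fin n → Fin 2) (Fin n → Fin 2) ℂ :=
  (∑ e ∈ E, ((Jy e.1 e.2 : ℂ) • (onQubit pauliY e.1 * onQubit pauliY e.2) +
      (Jz e.1 e.2 : ℂ) • (onQubit pauliZ e.1 * onQubit pauliZ e.2))) +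
    ∑ l ∈ V₁ ∪ V₂, (h l : ℂ) • onQubit pauliX l

theorem bipartiteFlip_mem_unitaryGroup (i : Fin n) :
    bipartiteFlip V₁ V₂ i ∈ unitaryGroup (Fin 2) ℂ := by
  unfold bipartiteFlip
  split_ifs
  exacts [pauliY_mem_unitaryGroup, pauliZ_mem_unitaryGroup, one_mem _]

variable {V₁ V₂}

theorem bipartiteFlip_of_mem_left {i : Fin n} (h : i ∈ V₁) : bipartiteFlip V₁ V₂ i = pauliY :=
  if_pos h

theorem bipartiteFlip_of_mem_right (hdisj : Disjoint V₁ V₂) {i : Fin n} (h : i ∈ V₂) :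
    bipartiteFlip V₁ V₂ i = pauliZ := by
  rw [bipartiteFlip, if_neg (Finset.disjoint_right.mp hdisj h), if_pos h]

theorem piKron_bipartiteFlip_conj_bipartiteHamiltonian (hdisj : Disjoint V₁ V₂)
    {E : Finset (Fin n × Fin n)} (hE : ∀ e ∈ E, e.1 ∈ V₁ ∧ e.2 ∈ V₂)
    (Jy Jz : Fin n → Fin n → ℝ) (h : Fin n → ℝ) :
    piKron (bipartiteFlip V₁ V₂) * bipartiteHamiltonian V₁ V₂ E Jy Jz h *
        (piKron (bipartiteFlip V₁ V₂))ᴴ = -bipartiteHamiltonian V₁ V₂ E Jy Jz h := by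
  let u : unitary (Matrix (Fin n → Fin 2) (Fin n → Fin 2) ℂ) :=
    ⟨_, piKron_mem_unitaryGroup (bipartiteFlip_mem_unitaryGroup V₁ V₂)⟩
  have conj_onQubit (P : Matrix (Fin 2) (Fin 2) ℂ) (j : Fin n) :
      Unitary.conjStarAlgAut ℂ _ u (onQubit P j) =
        onQubit (bipartiteFlip V₁ V₂ j * P * (bipartiteFlip V₁ V₂ j)ᴴ) j :=
    piKron_mul_onQubit_mul_conjTranspose (bipartiteFlip_mem_unitaryGroup V₁ V₂) P j
  change Unitary.conjStarAlgAut ℂ _ u _ = _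
  simp only [bipartiteHamiltonian, map_add, map_sum, map_smul, map_mul, conj_onQubit, neg_add,
    ← Finset.sum_neg_distrib]
  congr 1
  · refine Finset.sum_congr rfl fun e he => ?_
    obtain ⟨h₁, h₂⟩ := hE e he
    rw [bipartiteFlip_of_mem_left h₁, bipartiteFlip_of_mem_right hdisj h₂, pauliY_conj_pauliY,
      pauliZ_conj_pauliY, pauliY_conj_pauliZ, pauliZ_conj_pauliZ, onQubit_neg, onQubit_neg]
    simp only [mul_neg, neg_mul, smul_neg]
  · refine Finset.sum_congr rfl fun l hl => ?_
    rcases Finset.mem_union.mp hl with hl | hl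
    · rw [bipartiteFlip_of_mem_left hl, pauliY_conj_pauliX, onQubit_neg, smul_neg]
    · rw [bipartiteFlip_of_mem_right hdisj hl, pauliZ_conj_pauliX, onQubit_neg, smul_neg]

end Bipartite

theorem spectrum_neg_eq_of_unitary_conj {R A : Type*} [CommSemiring R] [Ring A] [Algebra R A]
    [StarMul A] {u a : A} (hu : u ∈ unitary A) (h : u * a * star u = -a) :
    spectrum R (-a) = spectrum R a := by
  rw [← h]
  exact spectrum.units_conjugate (u := Unitary.toUnits ⟨u, hu⟩)

theorem IsGreatest.isLeast_neg {α : Type*} [AddCommGroup α] [PartialOrder α]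
    [IsOrderedAddMonoid α] {s : Set α} {a : α} (hs : ∀ x ∈ s, -x ∈ s) (h : IsGreatest s a) :
    IsLeast s (-a) :=
  ⟨hs a h.1, fun x hx => neg_le.mpr (h.2 (hs x hx))⟩

/-- For the bipartite Hamiltonian
`H₂ = Σ_{(j,k)∈E} (J^y_{jk} Y_j Y_k + J^z_{jk} Z_j Z_k) + Σ_{l∈V} h_l X_l` and
`W = Π_{j∈V₁} Y_j Π_{k∈V₂} Z_k` (realized as a tensor product over the qubits):
`W` is unitary, `W H₂ W† = -H₂`, hence `H₂` and `-H₂` have the same spectrum and the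
smallest eigenvalue of `H₂` is the negative of its largest one. -/
theorem stmt_12 {n : ℕ} (V₁ V₂ : Finset (Fin n)) (hdisj : Disjoint V₁ V₂)
    (E : Finset (Fin n × Fin n)) (hE : ∀ e ∈ E, e.1 ∈ V₁ ∧ e.2 ∈ V₂)
    (Jy Jz : Fin n → Fin n → ℝ) (hc : Fin n → ℝ) :
    let H₂ : Matrix (Fin n → Fin 2) (Fin n → Fin 2) ℂ :=
      (∑ e ∈ E, ((Jy e.1 e.2 : ℂ) • (onQubit pauliY e.1 * onQubit pauliY e.2) +
          (Jz e.1 e.2 : ℂ) • (onQubit pauliZ e.1 * onQubit pauliZ e.2))) +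
        ∑ l ∈ V₁ ∪ V₂, (hc l : ℂ) • onQubit pauliX l
    let W : Matrix (Fin n → Fin 2) (Fin n → Fin 2) ℂ :=
      fun x y => ∏ i : Fin n,
        (if i ∈ V₁ then pauliY (x i) (y i)
          else if i ∈ V₂ then pauliZ (x i) (y i)
          else if x i = y i then (1 : ℂ) else 0)
    (W * Wᴴ = 1 ∧ Wᴴ * W = 1) ∧
    W * H₂ * Wᴴ = -H₂ ∧
    spectrum ℂ H₂ = spectrum ℂ (-H₂) ∧
    (∀ a : ℝ, IsGreatest {x : ℝ | (x : ℂ) ∈ spectrum ℂ H₂} a →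
      IsLeast {x : ℝ | (x : ℂ) ∈ spectrum ℂ H₂} (-a)) := by
  intro H₂ W
  have hW : W = piKron (bipartiteFlip V₁ V₂) := by
    ext x y
    refine Finset.prod_congr rfl fun i _ => ?_
    unfold bipartiteFlip
    split_ifs <;> simp [one_apply, *]
  have hWU : W ∈ unitaryGroup _ ℂ :=
    hW ▸ piKron_mem_unitaryGroup (bipartiteFlip_mem_unitaryGroup V₁ V₂)
  have hconj : W * H₂ * Wᴴ = -H₂ :=
    hW ▸ piKron_bipartiteFlip_conj_bipartiteHamiltonian hdisj hE Jy Jz hc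
  have hspec : spectrum ℂ H₂ = spectrum ℂ (-H₂) :=
    (spectrum_neg_eq_of_unitary_conj hWU hconj).symm
  refine ⟨⟨mem_unitaryGroup_iff.mp hWU, mem_unitaryGroup_iff'.mp hWU⟩, hconj, hspec,
    fun a ha => ha.isLeast_neg fun x hx => ?_⟩
  show ((-x : ℝ) : ℂ) ∈ spectrum ℂ H₂
  rw [hspec, ← spectrum.neg_eq, Complex.ofReal_neg, Set.neg_mem_neg]
  exact hx
end

section
/- Let 𝓗 be a real inner product space, let k_0, …, k_{D−1} ∈ 𝓗, let ỹ ∈ ℝ^D, and let q, r > 0. Define the functional M̃ : 𝓗 → ℝ by M̃(f) = q‖f‖² + r Σ_{j=0}^{D−1} ( ỹ_j − ⟨k_j, f⟩ )², and let 𝒦 be the D×D Gram matrix with entries 𝒦_{ij} = ⟨k_i, k_j⟩. Then: (i) the matrix (q/r) I_D + 𝒦 is positive definite, hence invertible; and (ii) the element f̂ = Σ_{i=0}^{D−1} β̂_i k_i, where β̂ ∈ ℝ^D is the unique solution of the linear system ( (q/r) I_D + 𝒦 ) β̂ = ỹ, is the unique global minimizer of M̃ over 𝓗, i.e., M̃(f̂)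 < M̃(f) for every f ∈ 𝓗 with f ≠ f̂. -/
open Matrix

/-- Variational characterization of the minimax estimate: for `M̃(f) = q‖f‖² +
r Σ_j (ỹ_j - ⟨k_j, f⟩)²` and Gram matrix `𝒦_{ij} = ⟨k_i, k_j⟩`, the matrix
`(q/r) I + 𝒦` is positive definite (hence invertible), and `f̂ = Σ_i β̂_i k_i` with
`((q/r) I + 𝒦) β̂ = ỹ` is the unique global minimizer of `M̃`. -/
theorem stmt_14 {𝓗 : Type*} [NormedAddCommGroup 𝓗] [InnerProductSpace ℝ 𝓗]
    {D : ℕ} (k : Fin D → 𝓗) (ytil : Fin D → ℝ) (q r : ℝ) (hq : 0 < q) (hr : 0 < r) :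
    let Mt : 𝓗 → ℝ := fun f =>
      q * ‖f‖ ^ 2 + r * ∑ j : Fin D, (ytil j - (inner ℝ (k j) f : ℝ)) ^ 2
    let K : Matrix (Fin D) (Fin D) ℝ := Matrix.of fun i j => (inner ℝ (k i) (k j) : ℝ)
    let A : Matrix (Fin D) (Fin D) ℝ := (q / r) • (1 : Matrix (Fin D) (Fin D) ℝ) + K
    (A.PosDef ∧ IsUnit A) ∧
    (∃! β : Fin D → ℝ, A.mulVec β = ytil) ∧
    (∀ β : Fin D → ℝ, A.mulVec β = ytil →
      ∀ f : 𝓗, f ≠ ∑ i : Fin D, β i • k i →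
        Mt (∑ i : Fin D, β i • k i) < Mt f) := by
  intro Mt K A
  have hr' : r ≠ 0 := hr.ne'
  have hqr : 0 < q / r := div_pos hq hr
  -- Gram identity
  have gram : ∀ x : Fin D → ℝ,
      x ⬝ᵥ K *ᵥ x = (inner ℝ (∑ i, x i • k i) (∑ i, x i • k i) : ℝ) := by
    intro x
    simp only [dotProduct, Matrix.mulVec, sum_inner, inner_sum,
      real_inner_smul_left, real_inner_smul_right, K, Matrix.of_apply,
      Finset.mul_sum]
    refine Finset.sum_congr rfl fun i _ => Finset.sum_congr rfl fun j _ => by rw [real_inner_comm (k j) (k i)]; ring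
  have hA : A.PosDef := by
    refine Matrix.PosDef.of_dotProduct_mulVec_pos ?_ ?_
    · ext i j
      simp only [A, K, Matrix.conjTranspose_apply, Matrix.add_apply, Matrix.smul_apply,
        Matrix.one_apply, Matrix.of_apply, star_trivial, smul_eq_mul]
      rw [real_inner_comm]
      rcases eq_or_ne i j with h | h
      · simp [h]
      · simp [h, Ne.symm h]
    · intro x hx
      have hAx : star x ⬝ᵥ A *ᵥ x = (q/r) * (x ⬝ᵥ x) + x ⬝ᵥ K *ᵥ x := by
        simp [A, Matrix.add_mulVec, Matrix.smul_mulVec, Matrix.one_mulVec,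
          dotProduct_add, dotProduct_smul, smul_eq_mul]
      rw [hAx, gram]
      have h1 : 0 < x ⬝ᵥ x := by
        have hnn : 0 ≤ x ⬝ᵥ x := Finset.sum_nonneg fun i _ => mul_self_nonneg _
        rcases hnn.lt_or_eq with h | h
        · exact h
        · exact absurd ((dotProduct_self_eq_zero).mp h.symm) hx
      have h2 : (0:ℝ) ≤ inner ℝ (∑ i, x i • k i) (∑ i, x i • k i) :=
        real_inner_self_nonneg
      nlinarith
  have hU : IsUnit A := hA.isUnit
  have hInv : Invertible A := A.invertibleOfIsUnitDet ((Matrix.isUnit_iff_isUnit_det A).mp hU)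
  refine ⟨⟨hA, hU⟩, ?_, ?_⟩
  · refine ⟨⅟A *ᵥ ytil, ?_, ?_⟩
    · show A *ᵥ (⅟A *ᵥ ytil) = ytil
      rw [Matrix.mulVec_mulVec, mul_invOf_self, Matrix.one_mulVec]
    · intro β hβ
      have := congrArg (fun v => ⅟A *ᵥ v) hβ
      simpa [Matrix.mulVec_mulVec, invOf_mul_self, Matrix.one_mulVec] using this
  · intro β hβ f hf
    set fh : 𝓗 := ∑ i, β i • k i with hfh
    set g : 𝓗 := f - fh with hgdef
    have hgne : g ≠ 0 := sub_ne_zero.mpr hf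
    have hfeq : f = fh + g := by rw [hgdef]; abel
    have hres : ∀ j, ytil j - (inner ℝ (k j) fh : ℝ) = (q/r) * β j := by
      intro j
      have h := congrFun hβ j
      simp only [Matrix.mulVec, dotProduct, A, K, Matrix.add_apply,
        Matrix.smul_apply, Matrix.one_apply, Matrix.of_apply, smul_eq_mul] at h
      have hKf : (inner ℝ (k j) fh : ℝ) = ∑ i, (inner ℝ (k j) (k i) : ℝ) * β i := by
        simp [hfh, inner_sum, real_inner_smul_right, mul_comm]
      rw [hKf, ← h]
      rw [Finset.sum_congr rfl (fun i _ => add_mul ((q/r) * (if j = i then (1:ℝ) else 0)) _ (β i)),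
        Finset.sum_add_distrib]
      simp [Finset.mul_sum, mul_ite, ite_mul, mul_assoc]
    have hinner : (inner ℝ fh g : ℝ) = ∑ j, β j * (inner ℝ (k j) g : ℝ) := by
      simp [hfh, sum_inner, real_inner_smul_left]
    have key : Mt f = Mt fh + (q * ‖g‖^2 + r * ∑ j, (inner ℝ (k j) g : ℝ)^2) := by
      have h1 : ‖f‖^2 = ‖fh‖^2 + 2 * (inner ℝ fh g : ℝ) + ‖g‖^2 := by
        rw [hfeq]; exact norm_add_sq_real fh g
      have h2 : ∀ j, (ytil j - (inner ℝ (k j) f : ℝ))^2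
          = (ytil j - (inner ℝ (k j) fh : ℝ))^2
            - 2*((q/r)*β j)*(inner ℝ (k j) g : ℝ) + (inner ℝ (k j) g : ℝ)^2 := by
        intro j
        rw [hfeq, inner_add_right, ← hres j]; ring
      simp only [Mt, h1]
      rw [Finset.sum_congr rfl (fun j _ => h2 j)]
      have hsplit : ∑ j, ((ytil j - (inner ℝ (k j) fh : ℝ))^2
            - 2*((q/r)*β j)*(inner ℝ (k j) g : ℝ) + (inner ℝ (k j) g : ℝ)^2)
          = (∑ j, (ytil j - (inner ℝ (k j) fh : ℝ))^2)
            - 2*(q/r)*(∑ j, β j * (inner ℝ (k j) g : ℝ)) + ∑ j, (inner ℝ (k j) g : ℝ)^2 := by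
        rw [Finset.sum_add_distrib, Finset.sum_sub_distrib, Finset.mul_sum]
        congr 2
        exact Finset.sum_congr rfl fun j _ => by ring
      rw [hsplit, ← hinner]
      field_simp
      ring
    rw [key]
    have hg2 : 0 < q * ‖g‖^2 := mul_pos hq (pow_pos (norm_pos_iff.mpr hgne) 2)
    have hs : 0 ≤ r * ∑ j, (inner ℝ (k j) g : ℝ)^2 :=
      mul_nonneg hr.le (Finset.sum_nonneg fun j _ => sq_nonneg _)
    linarith
end

section
/- Let M ≥ 1, let A be the M×M upper shift matrix (A_{jk} = 1 if k = j+1, else 0), let τ > 0, and let 0 < t_0 < t_1 < … < t_{D−1} < τ be distinct time points. For each j define the function k_j : [0, τ] → ℝ^M by k_j(t) = χ_j(t) · exp(A^T (t_j − t)) e_0, where χ_j(t) = 1 if t ≤ t_j and 0 otherwise. Then the functions k_0, …, k_{D−1} are linearly independent as elements of L²([0, τ]; ℝ^M): if Σ_{j=0}^{D−1} c_j k_j = 0 almost everywhere on [0, τ] for real scalars c_j, then c_0 = … = c_{D−1} = 0. -/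
open Matrix MeasureTheory
open scoped Nat

-- powers of the lower-shift matrix
lemma shift_pow {M : ℕ} (B : Matrix (Fin M) (Fin M) ℝ)
    (hB : ∀ j k : Fin M, B j k = if (j : ℕ) = (k : ℕ) + 1 then 1 else 0) :
    ∀ n (j k : Fin M), (B ^ n) j k = if (j : ℕ) = (k : ℕ) + n then 1 else 0 := by
  intro n
  induction n with
  | zero =>
    intro j k
    simp [Matrix.one_apply, Fin.ext_iff]
  | succ n ih =>
    intro j k
    rw [pow_succ, Matrix.mul_apply]
    by_cases hk : (k : ℕ) + 1 < M
    · rw [Finset.sum_eq_single (⟨(k : ℕ) + 1, hk⟩ : Fin M)]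
      · rw [ih, hB]
        simp only [if_pos rfl, mul_one, Fin.val_mk]
        by_cases hj : (j : ℕ) = (k : ℕ) + (n + 1)
        · rw [if_pos (by omega), if_pos hj]; simp
        · rw [if_neg (by omega), if_neg hj]; simp
      · intro l _ hl
        rw [hB]
        have : ¬ ((l : ℕ) = (k : ℕ) + 1) := by
          intro h; apply hl; exact Fin.ext h
        rw [if_neg this, mul_zero]
      · intro h; exact absurd (Finset.mem_univ _) h
    · have h1 : ∀ l : Fin M, (B ^ n) j l * B l k = 0 := by
        intro l
        rw [hB, if_neg (by omega : ¬ ((l : ℕ) = (k : ℕ) + 1)), mul_zero]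
      rw [Finset.sum_congr rfl fun l _ => h1 l, Finset.sum_const_zero]
      rw [if_neg (by omega : ¬ ((j : ℕ) = (k : ℕ) + (n + 1)))]

lemma exp_entry {M : ℕ} (B : Matrix (Fin M) (Fin M) ℝ)
    (hB : ∀ j k : Fin M, B j k = if (j : ℕ) = (k : ℕ) + 1 then 1 else 0)
    (s : ℝ) (i0 : Fin M) (hi0 : (i0 : ℕ) = 0) :
    NormedSpace.exp (s • B) i0 i0 = 1 := by
  have hzero : ∀ n, M ≤ n → (s • B) ^ n = 0 := by
    intro n hn
    rw [smul_pow]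
    have : B ^ n = 0 := by
      ext j k
      rw [shift_pow B hB, if_neg (by omega), Matrix.zero_apply]
    rw [this, smul_zero]
  have hsumm : Summable (fun n : ℕ => ((n ! : ℝ))⁻¹ • (s • B) ^ n) := by
    apply summable_of_ne_finset_zero (s := Finset.range M)
    intro n hn
    rw [hzero n (by simpa using hn), smul_zero]
  rw [NormedSpace.exp_eq_tsum ℝ]
  simp only []
  erw [tsum_apply hsumm, tsum_apply (Pi.summable.mp hsumm i0)]
  rw [tsum_eq_single 0 ?_]
  · simp
  · intro n hn
    have h1 := shift_pow B hB n i0 i0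
    simp only [smul_pow, Matrix.smul_apply, Pi.smul_apply, smul_eq_mul, h1, hi0]
    rw [if_neg (by omega), mul_zero, mul_zero]

/-- The kernel functions `k_j(t) = χ_j(t) exp(Aᵀ(t_j - t)) e₀` (with `A` the upper shift
matrix and `0 < t_0 < ... < t_{D-1} < τ` distinct times) are linearly independent in
`L²([0,τ]; ℝ^M)`: if `Σ_j c_j k_j = 0` almost everywhere on `[0,τ]`, then all `c_j = 0`. -/
theorem stmt_17 {M D : ℕ} (hM : 1 ≤ M)
    (A : Matrix (Fin M) (Fin M) ℝ)
    (hA : ∀ j k : Fin M, A j k = if (k : ℕ) = (j : ℕ) + 1 then 1 else 0)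
    (τ : ℝ) (hτ : 0 < τ)
    (tp : Fin D → ℝ) (htp0 : ∀ j, 0 < tp j) (htpτ : ∀ j, tp j < τ)
    (hmono : StrictMono tp) :
    let kfun : Fin D → ℝ → (Fin M → ℝ) := fun j t =>
      if t ≤ tp j then
        (NormedSpace.exp ((tp j - t) • Aᵀ)).mulVec (Pi.single (⟨0, hM⟩ : Fin M) 1)
      else 0
    ∀ c : Fin D → ℝ,
      (∀ᵐ t ∂(volume.restrict (Set.Icc (0 : ℝ) τ)),
        ∑ j : Fin D, c j • kfun j t = 0) →
      ∀ j, c j = 0 := by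
  intro kfun c hc
  set i0 : Fin M := ⟨0, hM⟩ with hi0def
  have hAT : ∀ j k : Fin M, Aᵀ j k = if (j : ℕ) = (k : ℕ) + 1 then 1 else 0 := by
    intro j k; rw [Matrix.transpose_apply, hA]
  -- the i0-th coordinate of each kernel is the indicator
  have hk : ∀ (j : Fin D) (t : ℝ), kfun j t i0 = if t ≤ tp j then 1 else 0 := by
    intro j t
    simp only [kfun]
    split_ifs with h
    · rw [Matrix.mulVec_single]
      simpa using exp_entry Aᵀ hAT (tp j - t) ⟨0, hM⟩ rfl
    · rfl
  -- the scalar a.e. statement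
  have hg : ∀ᵐ t ∂(volume.restrict (Set.Icc (0 : ℝ) τ)),
      ∑ j : Fin D, c j * (if t ≤ tp j then 1 else 0) = 0 := by
    filter_upwards [hc] with t ht
    have h2 := congrFun ht i0
    simpa [Finset.sum_apply, hk] using h2
  -- key lemma: constant value on a nonempty open subinterval must be 0
  have key : ∀ a b v : ℝ, 0 ≤ a → b ≤ τ → a < b →
      (∀ t ∈ Set.Ioo a b, ∑ j : Fin D, c j * (if t ≤ tp j then 1 else 0) = v) →
      v = 0 := by
    intro a b v ha hb hab hv
    by_contra hv0
    have hsub : Set.Ioo a b ⊆ {t : ℝ | ¬ (∑ j : Fin D, c j * (if t ≤ tp j then 1 else 0) = 0)} := by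
      intro t ht
      simp only [Set.mem_setOf_eq, hv t ht]
      exact hv0
    have h0 : (volume.restrict (Set.Icc (0 : ℝ) τ)) {t : ℝ | ¬ (∑ j : Fin D, c j * (if t ≤ tp j then 1 else 0) = 0)} = 0 := by
      exact hg
    have h1 : (volume.restrict (Set.Icc (0 : ℝ) τ)) (Set.Ioo a b) = 0 :=
      le_antisymm (h0 ▸ measure_mono hsub) (zero_le)
    rw [Measure.restrict_apply' measurableSet_Icc] at h1
    have hIoo : Set.Ioo a b ∩ Set.Icc 0 τ = Set.Ioo a b := by
      apply Set.inter_eq_left.mpr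
      intro t ht
      exact ⟨le_trans ha (le_of_lt ht.1), le_trans (le_of_lt ht.2) hb⟩
    rw [hIoo, Real.volume_Ioo] at h1
    exact absurd h1 (by simp [hab])
  -- tail sums vanish
  have hS : ∀ j : Fin D, ∑ k ∈ Finset.univ.filter (fun k => j ≤ k), c k = 0 := by
    intro j
    set a : ℝ := if h : (j : ℕ) = 0 then 0 else tp ⟨(j : ℕ) - 1, by omega⟩ with hadef
    have ha0 : 0 ≤ a := by
      rw [hadef]; split_ifs with h
      · exact le_refl 0
      · exact le_of_lt (htp0 _)
    have haj : a < tp j := by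
      rw [hadef]; split_ifs with h
      · exact htp0 j
      · exact hmono (by simp [Fin.lt_iff_val_lt_val]; omega)
    have hak : ∀ k : Fin D, k < j → tp k ≤ a := by
      intro k hkj
      rw [hadef]
      split_ifs with h
      · exact absurd hkj (by simp [Fin.lt_iff_val_lt_val, h])
      · exact hmono.monotone (by simp [Fin.le_iff_val_le_val]; omega)
    apply key a (tp j) _ ha0 (le_of_lt (htpτ j)) haj
    intro t ht
    rw [Finset.sum_filter]
    apply Finset.sum_congr rfl
    intro k _
    by_cases hjk : j ≤ k
    · rw [if_pos hjk, if_pos (le_trans (le_of_lt ht.2) (hmono.monotone hjk)), mul_one]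
    · rw [if_neg hjk, if_neg (not_le.mpr (lt_of_le_of_lt (hak k (not_le.mp hjk)) ht.1)), mul_zero]
  -- strict tail sums vanish
  have hT : ∀ j : Fin D, ∑ k ∈ Finset.univ.filter (fun k => j < k), c k = 0 := by
    intro j
    set b : ℝ := if h : (j : ℕ) + 1 < D then tp ⟨(j : ℕ) + 1, h⟩ else τ with hbdef
    have hbτ : b ≤ τ := by
      rw [hbdef]; split_ifs with h
      · exact le_of_lt (htpτ _)
      · exact le_refl τ
    have hjb : tp j < b := by
      rw [hbdef]; split_ifs with h
      · exact hmono (by simp [Fin.lt_iff_val_lt_val])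
      · exact htpτ j
    have hbk : ∀ k : Fin D, j < k → b ≤ tp k := by
      intro k hjk
      rw [hbdef]
      split_ifs with h
      · exact hmono.monotone (by simp [Fin.le_iff_val_le_val]; omega)
      · exfalso
        have hk2 := k.isLt
        rw [Fin.lt_iff_val_lt_val] at hjk
        omega
    apply key (tp j) b _ (le_of_lt (htp0 j)) hbτ hjb
    intro t ht
    rw [Finset.sum_filter]
    apply Finset.sum_congr rfl
    intro k _
    by_cases hjk : j < k
    · rw [if_pos hjk, if_pos (le_trans (le_of_lt ht.2) (hbk k hjk)), mul_one]
    · rw [if_neg hjk,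
        if_neg (not_le.mpr (lt_of_le_of_lt (hmono.monotone (not_lt.mp hjk)) ht.1)), mul_zero]
  -- conclude
  intro j
  have hsplit : Finset.univ.filter (fun k => j ≤ k) =
      insert j (Finset.univ.filter (fun k => j < k)) := by
    ext k
    simp [le_iff_lt_or_eq, or_comm, eq_comm]
  have hnotmem : j ∉ Finset.univ.filter (fun k => j < k) := by simp
  have := hS j
  rw [hsplit, Finset.sum_insert hnotmem, hT j, add_zero] at this
  exact this
end
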